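/- Sparse stopping gives Carleson: Let C(Q',Q) be a stopping criterion on pairs of dyadic cubes Q' ⊊ Q which is sparse, i.e. for every Q the maximal Q' ⊊ Q with C(Q',Q) true satisfy Σ|Q'| ≤ τ|Q| for a fixed τ < 1. If the initial collection I ⊂ D is Carleson, i.e. sup_{Q ∈ I} |Q|^{−1} Σ_{I ∋ R ⊂ Q} |R| < ∞, then the stopping family F(I, C) generated by iterating the stopping construction is also Carleson: sup_{Q ∈ F} |Q|^{−1} Σ_{F ∋ R ⊂ Q} |R| < ∞. -/

import Mathlib

/-!
Sort the stopping family `F` into layers by the stage at which a cube enters it. Below a fixed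
`Q ∈ F`, every cube of layer `j + 1` other than `Q` is a maximal stopping cube under a cube of
layer `j` inside `Q`: no member of `F` can lie strictly between a stopping cube and its parent.
Sparseness then gives `b (j + 1) ≤ τ * b j + [Q ∈ layer (j + 1)] |Q|` for the layer sums `b j`,
while `b 0 ≤ C_I |Q|`, since the Carleson condition on `I` passes from its members to every cube
through the maximal cubes of `I` inside it. Summing the recursion yields the constant
`(C_I + 1) / (1 - τ)`.
-/

open MeasureTheory Set ENNReal

noncomputable section

/-- The dyadic cube of generation `k` (side length `2^{-k}`) at position `m` in `ℝⁿ`. -/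
def dyadic (n : ℕ) (k : ℤ) (m : Fin n → ℤ) : Set (Fin n → ℝ) :=
  {x | ∀ i, (m i : ℝ) * 2 ^ (-k) ≤ x i ∧ x i < ((m i : ℝ) + 1) * 2 ^ (-k)}

/-- The maximal cubes `Q' ⊊ Q` for which the stopping criterion `crit Q' Q` holds. -/
def maxStop (n : ℕ) (crit : ℤ × (Fin n → ℤ) → ℤ × (Fin n → ℤ) → Prop)
    (Q : ℤ × (Fin n → ℤ)) : Set (ℤ × (Fin n → ℤ)) :=
  {Q' | dyadic n Q'.1 Q'.2 ⊂ dyadic n Q.1 Q.2 ∧ crit Q' Q ∧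
    ∀ R : ℤ × (Fin n → ℤ), dyadic n Q'.1 Q'.2 ⊂ dyadic n R.1 R.2 →
      dyadic n R.1 R.2 ⊂ dyadic n Q.1 Q.2 → ¬ crit R Q}

/-- The increasing stages of the stopping construction: start from the initial collection `I`;
at each stage add, for the members `F` already constructed, the maximal cubes `F' ⊊ F`
satisfying the criterion `crit F' F` and not contained in any already-constructed `F'' ⊊ F`. -/
def stopAcc (n : ℕ) (crit : ℤ × (Fin n → ℤ) → ℤ × (Fin n → ℤ) → Prop)
    (I : Set (ℤ × (Fin n → ℤ))) : ℕ → Set (ℤ × (Fin n → ℤ))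
  | 0 => I
  | k + 1 => stopAcc n crit I k ∪
      {F' | ∃ F ∈ stopAcc n crit I k, F' ∈ maxStop n crit F ∧
        ∀ F'' ∈ stopAcc n crit I k, dyadic n F''.1 F''.2 ⊂ dyadic n F.1 F.2 →
          ¬ dyadic n F'.1 F'.2 ⊆ dyadic n F''.1 F''.2}

/-- The stopping family `F(I, crit)` generated by iterating the stopping construction. -/
def stopFam (n : ℕ) (crit : ℤ × (Fin n → ℤ) → ℤ × (Fin n → ℤ) → Prop)
    (I : Set (ℤ × (Fin n → ℤ))) : Set (ℤ × (Fin n → ℤ)) :=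
  ⋃ k, stopAcc n crit I k

abbrev cube {n : ℕ} (P : ℤ × (Fin n → ℤ)) : Set (Fin n → ℝ) := dyadic n P.1 P.2

section Geometry

variable {n : ℕ}

lemma mem_dyadic_iff {k : ℤ} {m : Fin n → ℤ} {x : Fin n → ℝ} :
    x ∈ dyadic n k m ↔ ∀ i, ⌊x i * 2 ^ k⌋ = m i := by
  have h : (0 : ℝ) < 2 ^ k := by positivity
  refine forall_congr' fun i => ?_
  rw [Int.floor_eq_iff, zpow_neg, ← div_eq_mul_inv, ← div_eq_mul_inv, div_le_iff₀ h,
    lt_div_iff₀ h]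

lemma dyadic_eq_pi {k : ℤ} {m : Fin n → ℤ} :
    dyadic n k m = univ.pi fun i => Ico ((m i : ℝ) * 2 ^ (-k)) ((m i + 1) * 2 ^ (-k)) := by
  ext x
  simp [dyadic, mem_pi]

lemma measurableSet_dyadic {k : ℤ} {m : Fin n → ℤ} : MeasurableSet (dyadic n k m) := by
  rw [dyadic_eq_pi]
  exact .univ_pi fun _ => measurableSet_Ico

lemma volume_dyadic {k : ℤ} {m : Fin n → ℤ} :
    volume (dyadic n k m) = ENNReal.ofReal (2 ^ (-k)) ^ n := by
  simp_rw [dyadic_eq_pi, volume_pi_pi, Real.volume_Ico, add_mul, one_mul, add_sub_cancel_left,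
    Finset.prod_const, Finset.card_univ, Fintype.card_fin]

lemma dyadic_nonempty {k : ℤ} {m : Fin n → ℤ} : (dyadic n k m).Nonempty :=
  ⟨fun i => m i * 2 ^ (-k),
    fun _ => ⟨le_rfl, mul_lt_mul_of_pos_right (lt_add_one _) (by positivity)⟩⟩

lemma floor_mul_two_zpow_of_le {k k' : ℤ} (h : k' ≤ k) (y : ℝ) :
    ⌊y * 2 ^ k'⌋ = ⌊y * 2 ^ k⌋ / 2 ^ (k - k').toNat := by
  have hy : y * 2 ^ k' = y * 2 ^ k / ((2 ^ (k - k').toNat : ℕ) : ℝ) := by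
    rw [Nat.cast_pow, Nat.cast_ofNat, ← zpow_natCast, Int.toNat_of_nonneg (by omega),
      zpow_sub₀ two_ne_zero]
    field_simp
  rw [hy, Int.floor_div_natCast]
  push_cast
  rfl

lemma dyadic_subset_of_mem_of_le {k k' : ℤ} {m m' : Fin n → ℤ} {x : Fin n → ℝ} (h : k' ≤ k)
    (hx : x ∈ dyadic n k m) (hx' : x ∈ dyadic n k' m') : dyadic n k m ⊆ dyadic n k' m' := by
  intro y hy
  rw [mem_dyadic_iff] at hx hx' hy ⊢
  intro i
  rw [← hx' i, floor_mul_two_zpow_of_le h, floor_mul_two_zpow_of_le h, hx i, hy i]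

lemma cube_subset_or_subset_of_mem {P Q : ℤ × (Fin n → ℤ)} {x : Fin n → ℝ}
    (hP : x ∈ cube P) (hQ : x ∈ cube Q) : cube P ⊆ cube Q ∨ cube Q ⊆ cube P := by
  rcases le_total Q.1 P.1 with h | h
  · exact .inl (dyadic_subset_of_mem_of_le h hP hQ)
  · exact .inr (dyadic_subset_of_mem_of_le h hQ hP)

lemma cube_subset_or_subset_of_subset {S P Q : ℤ × (Fin n → ℤ)}
    (hP : cube S ⊆ cube P) (hQ : cube S ⊆ cube Q) : cube P ⊆ cube Q ∨ cube Q ⊆ cube P :=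
  have ⟨_, hx⟩ := dyadic_nonempty (n := n) (k := S.1) (m := S.2)
  cube_subset_or_subset_of_mem (hP hx) (hQ hx)

lemma eq_of_cube_subset_of_fst_eq {P Q : ℤ × (Fin n → ℤ)} (h : cube P ⊆ cube Q)
    (hk : P.1 = Q.1) : P = Q := by
  obtain ⟨x, hx⟩ := dyadic_nonempty (n := n) (k := P.1) (m := P.2)
  have hxQ := h hx
  rw [mem_dyadic_iff] at hx hxQ
  exact Prod.ext hk (funext fun i => by rw [← hx i, ← hxQ i, hk])

variable [NeZero n]

lemma fst_le_of_cube_subset {P Q : ℤ × (Fin n → ℤ)} (h : cube P ⊆ cube Q) : Q.1 ≤ P.1 := by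
  have hvol := measure_mono (μ := volume) h
  rw [volume_dyadic, volume_dyadic] at hvol
  by_contra! hlt
  refine hvol.not_gt (ENNReal.pow_lt_pow_left (NeZero.ne n) ?_)
  exact (ENNReal.ofReal_lt_ofReal_iff (by positivity)).2 (zpow_lt_zpow_right₀ one_lt_two (by omega))

lemma cube_injective : Function.Injective (cube : ℤ × (Fin n → ℤ) → Set (Fin n → ℝ)) :=
  fun _ _ h => eq_of_cube_subset_of_fst_eq h.le
    (le_antisymm (fst_le_of_cube_subset h.ge) (fst_le_of_cube_subset h.le))

lemma cube_ssubset_of_subset_of_ne {P Q : ℤ × (Fin n → ℤ)} (h : cube P ⊆ cube Q) (hne : P ≠ Q) :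
    cube P ⊂ cube Q :=
  h.ssubset_of_ne (cube_injective.ne hne)

lemma exists_maximal_subset {𝓕 : Set (ℤ × (Fin n → ℤ))} {R Q : ℤ × (Fin n → ℤ)} (hR : R ∈ 𝓕)
    (hRQ : cube R ⊆ cube Q) :
    ∃ M ∈ 𝓕, cube R ⊆ cube M ∧ cube M ⊆ cube Q ∧
      ∀ T ∈ 𝓕, cube M ⊆ cube T → cube T ⊆ cube Q → T = M := by
  obtain ⟨_, ⟨M, hM, hRM, hMQ, rfl⟩, hmin⟩ :=
    Int.exists_least_of_bdd (P := fun k => ∃ M ∈ 𝓕, cube R ⊆ cube M ∧ cube M ⊆ cube Q ∧ M.1 = k)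
      ⟨Q.1, fun _ ⟨_, _, _, hMQ, hk⟩ => hk ▸ fst_le_of_cube_subset hMQ⟩
      ⟨R.1, R, hR, le_rfl, hRQ, rfl⟩
  refine ⟨M, hM, hRM, hMQ, fun T hT hMT hTQ => (eq_of_cube_subset_of_fst_eq hMT ?_).symm⟩
  exact le_antisymm (hmin _ ⟨T, hT, hRM.trans hMT, hTQ, rfl⟩) (fst_le_of_cube_subset hMT)

end Geometry

section Layers

variable {n : ℕ} {crit : ℤ × (Fin n → ℤ) → ℤ × (Fin n → ℤ) → Prop} {I : Set (ℤ × (Fin n → ℤ))}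

/-- `S` is added below `F` at stage `k + 1` of the stopping construction. -/
def IsStopChild (crit : ℤ × (Fin n → ℤ) → ℤ × (Fin n → ℤ) → Prop) (I : Set (ℤ × (Fin n → ℤ)))
    (k : ℕ) (F S : ℤ × (Fin n → ℤ)) : Prop :=
  S ∈ maxStop n crit F ∧ ∀ F'' ∈ stopAcc n crit I k, cube F'' ⊂ cube F → ¬ cube S ⊆ cube F''

lemma mem_stopAcc_succ {k : ℕ} {S : ℤ × (Fin n → ℤ)} :
    S ∈ stopAcc n crit I (k + 1) ↔
      S ∈ stopAcc n crit I k ∨ ∃ F ∈ stopAcc n crit I k, IsStopChild crit I k F S :=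
  Iff.rfl

lemma stopAcc_mono : Monotone (stopAcc n crit I) :=
  monotone_nat_of_le_succ fun _ => subset_union_left

def stopLayer (n : ℕ) (crit : ℤ × (Fin n → ℤ) → ℤ × (Fin n → ℤ) → Prop)
    (I : Set (ℤ × (Fin n → ℤ))) : ℕ → Set (ℤ × (Fin n → ℤ))
  | 0 => I
  | j + 1 => stopAcc n crit I (j + 1) \ stopAcc n crit I j

lemma stopLayer_subset_stopAcc (j : ℕ) : stopLayer n crit I j ⊆ stopAcc n crit I j := by
  cases j with
  | zero => exact subset_rfl
  | succ j => exact sdiff_subset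

lemma mem_stopFam_iff_exists_stopLayer {S : ℤ × (Fin n → ℤ)} :
    S ∈ stopFam n crit I ↔ ∃ j, S ∈ stopLayer n crit I j := by
  refine ⟨fun hS => ?_, fun ⟨j, hj⟩ => mem_iUnion.2 ⟨j, stopLayer_subset_stopAcc j hj⟩⟩
  obtain ⟨k, hk⟩ := mem_iUnion.1 hS
  induction k with
  | zero => exact ⟨0, hk⟩
  | succ k ih =>
    by_cases h : S ∈ stopAcc n crit I k
    · exact ih h
    · exact ⟨k + 1, hk, h⟩

lemma eq_of_mem_stopLayer {j j' : ℕ} {S : ℤ × (Fin n → ℤ)} (h : S ∈ stopLayer n crit I j)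
    (h' : S ∈ stopLayer n crit I j') : j = j' := by
  have not_mem_of_lt {i i' : ℕ} (hii' : i < i') (hi : S ∈ stopLayer n crit I i) :
      S ∉ stopLayer n crit I i' := by
    obtain ⟨i', rfl⟩ := Nat.exists_eq_add_of_lt hii'
    exact fun hi' => hi'.2 (stopAcc_mono (by omega) (stopLayer_subset_stopAcc i hi))
  by_contra hne
  rcases Nat.lt_or_gt_of_ne hne with hlt | hlt
  exacts [not_mem_of_lt hlt h h', not_mem_of_lt hlt h' h]

lemma exists_isStopChild_of_mem_stopLayer_succ {j : ℕ} {S : ℤ × (Fin n → ℤ)}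
    (hS : S ∈ stopLayer n crit I (j + 1)) :
    ∃ F ∈ stopLayer n crit I j, IsStopChild crit I j F S := by
  obtain ⟨hS | ⟨F, hF, hSF⟩, hSj⟩ := hS
  · exact absurd hS hSj
  cases j with
  | zero => exact ⟨F, hF, hSF⟩
  | succ j =>
    -- were `F` already present at stage `j`, then `S` would have entered at stage `j + 1`
    refine ⟨F, ⟨hF, fun hFj => hSj (.inr ⟨F, hFj, hSF.1, fun F'' hF'' => ?_⟩)⟩, hSF⟩
    exact hSF.2 F'' (stopAcc_mono j.le_succ hF'')

lemma IsStopChild.not_ssubset_of_ssubset [NeZero n] {j k : ℕ} {F S Q : ℤ × (Fin n → ℤ)}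
    (hF : F ∈ stopAcc n crit I j) (hS : IsStopChild crit I j F S) (hQ : Q ∈ stopAcc n crit I k)
    (hSQ : cube S ⊂ cube Q) : ¬ cube Q ⊂ cube F := by
  intro hQF
  induction k generalizing Q with
  | zero => exact hS.2 Q (stopAcc_mono j.zero_le hQ) hQF hSQ.subset
  | succ k ih =>
    obtain hQ | ⟨P, hP, hQP⟩ := mem_stopAcc_succ.1 hQ
    · exact ih hQ hSQ hQF
    -- if `P = F`, then `S ⊊ Q` are both maximal stopping cubes under `F`
    have hPF : P ≠ F := by
      rintro rfl
      exact hS.1.2.2 Q hSQ hQP.1.1 hQP.1.2.1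
    obtain hPF' | hFP := cube_subset_or_subset_of_subset hQP.1.1.subset hQF.subset
    · exact ih hP (hSQ.trans hQP.1.1) (cube_ssubset_of_subset_of_ne hPF' hPF)
    by_cases hjk : j ≤ k
    · exact hQP.2 F (stopAcc_mono hjk hF) (cube_ssubset_of_subset_of_ne hFP hPF.symm) hQF.subset
    · exact hS.2 Q (stopAcc_mono (by omega) (mem_stopAcc_succ.2 (.inr ⟨P, hP, hQP⟩))) hQF
        hSQ.subset

lemma exists_stopLayer_parent_subset [NeZero n] {j : ℕ} {S Q : ℤ × (Fin n → ℤ)}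
    (hS : S ∈ stopLayer n crit I (j + 1)) (hQ : Q ∈ stopFam n crit I) (hSQ : cube S ⊂ cube Q) :
    ∃ F ∈ stopLayer n crit I j, S ∈ maxStop n crit F ∧ cube F ⊆ cube Q := by
  obtain ⟨F, hF, hSF⟩ := exists_isStopChild_of_mem_stopLayer_succ hS
  obtain ⟨k, hQ⟩ := mem_iUnion.1 hQ
  refine ⟨F, hF, hSF.1, ?_⟩
  obtain hFQ | hQF := cube_subset_or_subset_of_subset hSF.1.1.subset hSQ.subset
  · exact hFQ
  · by_contra hFQ
    exact hSF.not_ssubset_of_ssubset (stopLayer_subset_stopAcc j hF) hQ hSQ ⟨hQF, hFQ⟩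

lemma stopFam_fin_zero (crit : ℤ × (Fin 0 → ℤ) → ℤ × (Fin 0 → ℤ) → Prop)
    (I : Set (ℤ × (Fin 0 → ℤ))) : stopFam 0 crit I = I := by
  have huniv (P : ℤ × (Fin 0 → ℤ)) : cube P = univ := eq_univ_of_forall fun _ i => i.elim0
  have hmax (Q : ℤ × (Fin 0 → ℤ)) : maxStop 0 crit Q = ∅ :=
    eq_empty_of_forall_notMem fun S hS => hS.1.ne ((huniv S).trans (huniv Q).symm)
  have hacc (k : ℕ) : stopAcc 0 crit I k = I := by
    induction k with
    | zero => rfl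
    | succ k ih => simp [stopAcc, ih, hmax]
  simp only [stopFam, hacc, iUnion_const]

end Layers

theorem ENNReal.tsum_mul_tsum_eq_tsum_sum_range (f g : ℕ → ℝ≥0∞) :
    (∑' n, f n) * ∑' n, g n = ∑' n, ∑ k ∈ Finset.range (n + 1), f k * g (n - k) := by
  simp_rw [← Finset.Nat.sum_antidiagonal_eq_sum_range_succ fun k l => f k * g l,
    ← ENNReal.tsum_mul_right, ← ENNReal.tsum_mul_left, ← ENNReal.tsum_prod,
    ← Finset.HasAntidiagonal.sigmaAntidiagonalEquivProd.tsum_eq, ENNReal.tsum_sigma',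
    Finset.HasAntidiagonal.sigmaAntidiagonalEquivProd_apply]
  exact tsum_congr fun n =>
    Finset.tsum_subtype (Finset.HasAntidiagonal.antidiagonal n) fun p => f p.1 * g p.2

/-- Unrolling the recursion bounds `b j` by the convolution of `a` with `j ↦ t ^ j`. -/
theorem ENNReal.tsum_le_of_le_mul_add {t : ℝ≥0∞} {a b : ℕ → ℝ≥0∞} (h0 : b 0 ≤ a 0)
    (hsucc : ∀ j, b (j + 1) ≤ t * b j + a (j + 1)) : ∑' j, b j ≤ (1 - t)⁻¹ * ∑' j, a j := by
  have hconv (j : ℕ) : b j ≤ ∑ i ∈ Finset.range (j + 1), a i * t ^ (j - i) := by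
    induction j with
    | zero => simpa using h0
    | succ j ih =>
      calc b (j + 1) ≤ t * b j + a (j + 1) := hsucc j
        _ ≤ t * ∑ i ∈ Finset.range (j + 1), a i * t ^ (j - i) + a (j + 1) := by gcongr
        _ = _ := by
          rw [Finset.sum_range_succ _ (j + 1), Nat.sub_self, pow_zero, mul_one, Finset.mul_sum]
          congr 1
          refine Finset.sum_congr rfl fun i hi => ?_
          rw [Finset.mem_range] at hi
          rw [show j + 1 - i = j - i + 1 by omega, pow_succ]
          ring
  calc ∑' j, b j ≤ ∑' j, ∑ i ∈ Finset.range (j + 1), a i * t ^ (j - i) := ENNReal.tsum_le_tsum hconv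
    _ = (∑' j, a j) * ∑' j, t ^ j := (ENNReal.tsum_mul_tsum_eq_tsum_sum_range _ _).symm
    _ = (1 - t)⁻¹ * ∑' j, a j := by rw [ENNReal.tsum_geometric, mul_comm]

section Carleson

variable {n : ℕ}

def carlesonSum (𝓕 : Set (ℤ × (Fin n → ℤ))) (Q : ℤ × (Fin n → ℤ)) : ℝ≥0∞ :=
  ∑' R : ↥{R ∈ 𝓕 | cube R ⊆ cube Q}, volume (cube R.1)

lemma carlesonSum_le_of_subset_iUnion {ι : Type*} {𝓕 : Set (ℤ × (Fin n → ℤ))}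
    {Q : ℤ × (Fin n → ℤ)} {s : ι → Set (ℤ × (Fin n → ℤ))}
    (h : {R ∈ 𝓕 | cube R ⊆ cube Q} ⊆ ⋃ i, s i) :
    carlesonSum 𝓕 Q ≤ ∑' i, ∑' R : s i, volume (cube R.1) :=
  (ENNReal.tsum_mono_subtype (fun R => volume (cube R)) h).trans
    (ENNReal.tsum_iUnion_le_tsum (fun R => volume (cube R)) s)

/-- Group the cubes of `𝓕` inside `Q` under the maximal ones, which are pairwise disjoint. -/
lemma carlesonSum_le_of_forall_mem [NeZero n] {𝓕 : Set (ℤ × (Fin n → ℤ))} {C : ℝ≥0∞}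
    (h𝓕 : ∀ Q ∈ 𝓕, carlesonSum 𝓕 Q ≤ C * volume (cube Q)) (Q : ℤ × (Fin n → ℤ)) :
    carlesonSum 𝓕 Q ≤ C * volume (cube Q) := by
  set 𝓜 := {M ∈ 𝓕 | cube M ⊆ cube Q ∧ ∀ T ∈ 𝓕, cube M ⊆ cube T → cube T ⊆ cube Q → T = M}
  have hcover : {R ∈ 𝓕 | cube R ⊆ cube Q} ⊆ ⋃ M : 𝓜, {R ∈ 𝓕 | cube R ⊆ cube M.1} := by
    rintro R ⟨hR, hRQ⟩
    obtain ⟨M, hM, hRM, hMQ, hmax⟩ := exists_maximal_subset hR hRQ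
    exact mem_iUnion.2 ⟨⟨M, hM, hMQ, hmax⟩, hR, hRM⟩
  have hdisj : Pairwise fun M M' : 𝓜 => Disjoint (cube M.1) (cube M'.1) := by
    intro M M' hne
    refine not_not.1 fun hMM' => hne ?_
    obtain ⟨x, hxM, hxM'⟩ := not_disjoint_iff.1 hMM'
    obtain h | h := cube_subset_or_subset_of_mem hxM hxM'
    · exact Subtype.ext (M.2.2.2 M'.1 M'.2.1 h M'.2.2.1).symm
    · exact Subtype.ext (M'.2.2.2 M.1 M.2.1 h M.2.2.1)
  calc carlesonSum 𝓕 Q ≤ ∑' M : 𝓜, carlesonSum 𝓕 M := carlesonSum_le_of_subset_iUnion hcover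
    _ ≤ ∑' M : 𝓜, C * volume (cube M.1) := ENNReal.tsum_le_tsum fun M => h𝓕 M M.2.1
    _ = C * ∑' M : 𝓜, volume (cube M.1) := ENNReal.tsum_mul_left
    _ ≤ C * volume (cube Q) := by
      gcongr
      exact (tsum_meas_le_meas_iUnion_of_disjoint volume (fun _ => measurableSet_dyadic)
        hdisj).trans (measure_mono (iUnion_subset fun M => M.2.2.1))

variable {crit : ℤ × (Fin n → ℤ) → ℤ × (Fin n → ℤ) → Prop} {I : Set (ℤ × (Fin n → ℤ))}

lemma carlesonSum_stopFam_le_tsum (Q : ℤ × (Fin n → ℤ)) :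
    carlesonSum (stopFam n crit I) Q ≤ ∑' j, carlesonSum (stopLayer n crit I j) Q := by
  refine carlesonSum_le_of_subset_iUnion fun R ⟨hR, hRQ⟩ => ?_
  obtain ⟨j, hj⟩ := mem_stopFam_iff_exists_stopLayer.1 hR
  exact mem_iUnion.2 ⟨j, hj, hRQ⟩

lemma tsum_inter_singleton {α M : Type*} [AddCommMonoid M] [TopologicalSpace M] (f : α → M)
    (s : Set α) (a : α) [Decidable (a ∈ s)] :
    ∑' x : ↥(s ∩ {a}), f x = if a ∈ s then f a else 0 := by
  split_ifs with ha
  · rw [inter_singleton_of_mem ha, tsum_singleton]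
  · rw [inter_singleton_eq_empty.2 ha, tsum_empty]

lemma carlesonSum_stopLayer_succ_le [NeZero n] {t : ℝ≥0∞}
    (hsparse : ∀ Q : ℤ × (Fin n → ℤ),
      ∑' Q' : maxStop n crit Q, volume (cube Q'.1) ≤ t * volume (cube Q))
    {Q : ℤ × (Fin n → ℤ)} (hQ : Q ∈ stopFam n crit I) (j : ℕ)
    [Decidable (Q ∈ stopLayer n crit I (j + 1))] :
    carlesonSum (stopLayer n crit I (j + 1)) Q ≤
      t * carlesonSum (stopLayer n crit I j) Q +
        if Q ∈ stopLayer n crit I (j + 1) then volume (cube Q) else 0 := by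
  set 𝓟 := {F ∈ stopLayer n crit I j | cube F ⊆ cube Q}
  have hcover : {R ∈ stopLayer n crit I (j + 1) | cube R ⊆ cube Q} ⊆
      (stopLayer n crit I (j + 1) ∩ {Q}) ∪ ⋃ F : 𝓟, maxStop n crit F := by
    rintro R ⟨hR, hRQ⟩
    by_cases hRQ' : R = Q
    · exact .inl ⟨hR, hRQ'⟩
    obtain ⟨F, hF, hRF, hFQ⟩ :=
      exists_stopLayer_parent_subset hR hQ (cube_ssubset_of_subset_of_ne hRQ hRQ')
    exact .inr (mem_iUnion.2 ⟨⟨F, hF, hFQ⟩, hRF⟩)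
  calc carlesonSum (stopLayer n crit I (j + 1)) Q
      ≤ ∑' R : ↥(stopLayer n crit I (j + 1) ∩ {Q}), volume (cube R.1) +
          ∑' R : ↥(⋃ F : 𝓟, maxStop n crit F), volume (cube R.1) :=
        (ENNReal.tsum_mono_subtype (fun R => volume (cube R)) hcover).trans
          (ENNReal.tsum_union_le (fun R => volume (cube R)) _ _)
    _ ≤ (if Q ∈ stopLayer n crit I (j + 1) then volume (cube Q) else 0) +
          ∑' F : 𝓟, t * volume (cube F.1) := by
        rw [tsum_inter_singleton (fun R => volume (cube R))]
        gcongr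
        exact (ENNReal.tsum_iUnion_le_tsum (fun R => volume (cube R)) _).trans
          (ENNReal.tsum_le_tsum fun F => hsparse F)
    _ = _ := by rw [ENNReal.tsum_mul_left, add_comm]; rfl

theorem carlesonSum_stopFam_le {t CI : ℝ≥0∞}
    (hsparse : ∀ Q : ℤ × (Fin n → ℤ),
      ∑' Q' : maxStop n crit Q, volume (cube Q'.1) ≤ t * volume (cube Q))
    (hI : ∀ Q ∈ I, carlesonSum I Q ≤ CI * volume (cube Q))
    {Q : ℤ × (Fin n → ℤ)} (hQ : Q ∈ stopFam n crit I) :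
    carlesonSum (stopFam n crit I) Q ≤ (1 - t)⁻¹ * (CI + 1) * volume (cube Q) := by
  classical
  set V := volume (cube Q)
  rcases eq_or_ne n 0 with rfl | hn
  · rw [stopFam_fin_zero] at hQ ⊢
    calc carlesonSum I Q ≤ CI * V := hI Q hQ
      _ ≤ (1 - t)⁻¹ * (CI + 1) * V := by
        gcongr
        exact le_self_add.trans (le_mul_of_one_le_left' (ENNReal.one_le_inv.2 tsub_le_self))
  have : NeZero n := ⟨hn⟩
  obtain ⟨j₀, hj₀⟩ := mem_stopFam_iff_exists_stopLayer.1 hQ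
  have hlayer (j : ℕ) : Q ∈ stopLayer n crit I j ↔ j = j₀ :=
    ⟨fun h => eq_of_mem_stopLayer h hj₀, fun h => h ▸ hj₀⟩
  calc carlesonSum (stopFam n crit I) Q ≤ ∑' j, carlesonSum (stopLayer n crit I j) Q :=
        carlesonSum_stopFam_le_tsum Q
    _ ≤ (1 - t)⁻¹ * ∑' j, ((if j = 0 then CI * V else 0) + if j = j₀ then V else 0) := by
        refine ENNReal.tsum_le_of_le_mul_add ?_ fun j => ?_
        · exact (carlesonSum_le_of_forall_mem hI Q).trans le_self_add
        · simpa [hlayer] using carlesonSum_stopLayer_succ_le hsparse hQ j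
    _ = (1 - t)⁻¹ * (CI + 1) * V := by
        rw [ENNReal.tsum_add, tsum_ite_eq, tsum_ite_eq]
        ring

end Carleson

theorem stmt10_general (n : ℕ) (τ : ℝ) (hτ1 : τ < 1)
    (CI : ℝ≥0∞) (hCI : CI ≠ ⊤)
    (crit : ℤ × (Fin n → ℤ) → ℤ × (Fin n → ℤ) → Prop)
    (I : Set (ℤ × (Fin n → ℤ)))
    (hsparse : ∀ Q : ℤ × (Fin n → ℤ),
      ∑' Q' : maxStop n crit Q, volume (dyadic n Q'.val.1 Q'.val.2)
        ≤ ENNReal.ofReal τ * volume (dyadic n Q.1 Q.2))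
    (hI : ∀ Q ∈ I,
      ∑' R : {R : ℤ × (Fin n → ℤ) // R ∈ I ∧ dyadic n R.1 R.2 ⊆ dyadic n Q.1 Q.2},
        volume (dyadic n R.val.1 R.val.2) ≤ CI * volume (dyadic n Q.1 Q.2)) :
    ∃ C : ℝ≥0∞, C ≠ ⊤ ∧
      ∀ Q ∈ stopFam n crit I,
        ∑' R : {R : ℤ × (Fin n → ℤ) //
            R ∈ stopFam n crit I ∧ dyadic n R.1 R.2 ⊆ dyadic n Q.1 Q.2},
          volume (dyadic n R.val.1 R.val.2) ≤ C * volume (dyadic n Q.1 Q.2) := by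
  have hτ : (1 - ENNReal.ofReal τ)⁻¹ ≠ ⊤ :=
    ENNReal.inv_ne_top.2 (tsub_pos_of_lt (ENNReal.ofReal_lt_one.2 hτ1)).ne'
  exact ⟨_, ENNReal.mul_ne_top hτ (ENNReal.add_ne_top.2 ⟨hCI, ENNReal.one_ne_top⟩),
    fun Q hQ => carlesonSum_stopFam_le hsparse hI hQ⟩

/-- if the stopping criterion is sparse (with constant `τ < 1`) and the initial
collection `I` is Carleson, then the stopping family `F(I, crit)` is Carleson. -/
theorem stmt10 (n : ℕ) (τ : ℝ) (hτ0 : 0 ≤ τ) (hτ1 : τ < 1)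
    (CI : ℝ≥0∞) (hCI : CI ≠ ⊤)
    (crit : ℤ × (Fin n → ℤ) → ℤ × (Fin n → ℤ) → Prop)
    (I : Set (ℤ × (Fin n → ℤ)))
    (hsparse : ∀ Q : ℤ × (Fin n → ℤ),
      ∑' Q' : maxStop n crit Q, volume (dyadic n Q'.val.1 Q'.val.2)
        ≤ ENNReal.ofReal τ * volume (dyadic n Q.1 Q.2))
    (hI : ∀ Q ∈ I,
      ∑' R : {R : ℤ × (Fin n → ℤ) // R ∈ I ∧ dyadic n R.1 R.2 ⊆ dyadic n Q.1 Q.2},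
        volume (dyadic n R.val.1 R.val.2) ≤ CI * volume (dyadic n Q.1 Q.2)) :
    ∃ C : ℝ≥0∞, C ≠ ⊤ ∧
      ∀ Q ∈ stopFam n crit I,
        ∑' R : {R : ℤ × (Fin n → ℤ) //
            R ∈ stopFam n crit I ∧ dyadic n R.1 R.2 ⊆ dyadic n Q.1 Q.2},
          volume (dyadic n R.val.1 R.val.2) ≤ C * volume (dyadic n Q.1 Q.2) :=
  stmt10_general n τ hτ1 CI hCI crit I hsparse hI
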